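/- arXiv:2511.10854 — 5 statements merged into one kernel-verified Lean document; each statement's English description precedes it below -/
import Mathlib

section
/- Let T ≥ 1 and let p¹ ≤ p² ≤ ... ≤ p^T be nonnegative reals, and let p_D > 0. Define h(t) = (1/t)(p_D + Σ_{s=1}^t p^s) for t ∈ {1,...,T}. Then h is unimodal: for all t with 1 ≤ t ≤ T−2, if h(t) ≤ h(t+1) then h(t+1) ≤ h(t+2). -/
/-- Unimodality of the effective per-unit cost `h` under anytime peak pricing:
if prices are nondecreasing and nonnegative and the demand rate is positive,
then `h t ≤ h (t+1)` implies `h (t+1) ≤ h (t+2)`. -/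
theorem stmt0 (T : ℕ) (hT : 1 ≤ T) (p : ℕ → ℝ) (pD : ℝ)
    (hp0 : ∀ s, 1 ≤ s → s ≤ T → 0 ≤ p s)
    (hpmono : ∀ s s', 1 ≤ s → s ≤ s' → s' ≤ T → p s ≤ p s')
    (hpD : 0 < pD)
    (h : ℕ → ℝ)
    (hdef : ∀ t, h t = (pD + ∑ s ∈ Finset.Icc 1 t, p s) / t) :
    ∀ t, 1 ≤ t → t ≤ T - 2 → h t ≤ h (t + 1) → h (t + 1) ≤ h (t + 2) := by
  intro t ht1 htT hle
  have ht2T : t + 2 ≤ T := by omega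
  have ht0 : (0:ℝ) < (t:ℝ) := by exact_mod_cast Nat.pos_of_ne_zero (by omega)
  have ht10 : (0:ℝ) < ((t:ℝ) + 1) := by linarith
  have ht20 : (0:ℝ) < ((t:ℝ) + 2) := by linarith
  set a : ℝ := pD + ∑ s ∈ Finset.Icc 1 t, p s with ha
  have hs1 : ∑ s ∈ Finset.Icc 1 (t+1), p s = (∑ s ∈ Finset.Icc 1 t, p s) + p (t+1) :=
    Finset.sum_Icc_succ_top (by omega) p
  have hs2 : ∑ s ∈ Finset.Icc 1 (t+2), p s = (∑ s ∈ Finset.Icc 1 (t+1), p s) + p (t+2) :=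
    Finset.sum_Icc_succ_top (by omega) p
  have hpm : p (t+1) ≤ p (t+2) := hpmono (t+1) (t+2) (by omega) (by omega) ht2T
  have e1 : h t = a / t := by rw [hdef]
  have e2 : h (t+1) = (a + p (t+1)) / ((t:ℝ) + 1) := by
    rw [hdef, hs1, ha]; push_cast; ring_nf
  have e3 : h (t+2) = (a + p (t+1) + p (t+2)) / ((t:ℝ) + 2) := by
    rw [hdef, hs2, hs1, ha]; push_cast; ring_nf
  rw [e1, e2] at hle
  rw [e2, e3]
  rw [div_le_div_iff₀ ht0 ht10] at hle
  rw [div_le_div_iff₀ ht10 ht20]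
  have key : a ≤ (t:ℝ) * p (t+1) := by nlinarith
  nlinarith
end

section
/- Let T ≥ 2, let p¹ ≤ ... ≤ p^T be nonnegative reals, let p_D > 0, let r > 0, and suppose m > 0 satisfies t' = ⌊r/m⌋ ≤ T−1 with r − m·t' > 0 and p_D + Σ_{s=1}^{t'} p^s ≤ t'·p^{t'+1}. Then the cost of the water-filling solution with cap m, namely m(p_D + Σ_{s=1}^{t'} p^s) + p^{t'+1}(r − m·t'), is at least the cost of the water-filling solution with cap r/t', namely (r/t')(p_D + Σ_{s=1}^{t'} p^s). -/
/-- Under anytime peak pricing, shifting the leftover consumption of a water-filling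
solution with cap `m` into the first `t' = ⌊r/m⌋` periods (yielding the water-filling
solution with cap `r/t'`) does not increase cost when `pD + ∑_{s=1}^{t'} p^s ≤ t' p^{t'+1}`. -/
theorem stmt4 (T : ℕ) (hT : 2 ≤ T) (p : ℕ → ℝ) (pD r m : ℝ)
    (hp0 : ∀ s, 1 ≤ s → s ≤ T → 0 ≤ p s)
    (hpmono : ∀ s s', 1 ≤ s → s ≤ s' → s' ≤ T → p s ≤ p s')
    (hpD : 0 < pD) (hr : 0 < r) (hm : 0 < m)
    (t' : ℕ) (ht' : t' = ⌊r / m⌋₊) (ht'T : t' ≤ T - 1)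
    (hleft : 0 < r - m * t')
    (hshift : pD + ∑ s ∈ Finset.Icc 1 t', p s ≤ (t' : ℝ) * p (t' + 1)) :
    (r / t') * (pD + ∑ s ∈ Finset.Icc 1 t', p s)
      ≤ m * (pD + ∑ s ∈ Finset.Icc 1 t', p s) + p (t' + 1) * (r - m * t') := by
  rcases Nat.eq_zero_or_pos t' with h0 | hpos
  · subst h0
    simp only [Nat.cast_zero, div_zero, zero_mul, mul_zero, sub_zero]
    have hp1 : 0 ≤ p 1 := hp0 1 le_rfl (by omega)
    have hS : (0:ℝ) < pD + ∑ s ∈ Finset.Icc 1 0, p s := by simp [hpD]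
    nlinarith
  · have ht'R : (0:ℝ) < (t' : ℝ) := by exact_mod_cast hpos
    have hS0 : 0 ≤ pD + ∑ s ∈ Finset.Icc 1 t', p s := by
      have : 0 ≤ ∑ s ∈ Finset.Icc 1 t', p s :=
        Finset.sum_nonneg fun s hs => by
          simp only [Finset.mem_Icc] at hs
          exact hp0 s hs.1 (by omega)
      linarith
    rw [div_mul_eq_mul_div, div_le_iff₀ ht'R]
    nlinarith [mul_le_mul_of_nonneg_left hshift (le_of_lt hleft)]
end

section
/- Let T ≥ 1, δ > 1, b_max ≥ 0, and r₁,...,r_N > 0, and let π¹,...,π^T be strictly positive reals. Then b_max + (Σ_i r_i)/T ≤ b_max + ρ·Σ_i r_i ≤ b_max + Σ_i r_i, where ρ = (δ·min_t π^t)^{−1/(δ−1)} / Σ_t (δ·π^t)^{−1/(δ−1)}. In words: the equilibrium peak demand under progressive peak pricing (middle term) lies between the equilibrium peak under anytime peak pricing (left term) and under coincident peak pricing (right term). -/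
/-- The equilibrium peak demand under progressive peak pricing, `b_max + ρ ∑ r_i`,
lies between the anytime-peak level `b_max + (∑ r_i)/T` and the coincident-peak level
`b_max + ∑ r_i`. -/
theorem stmt7 (T N : ℕ) (hT : 1 ≤ T)
    (hne : (Finset.univ : Finset (Fin T)).Nonempty)
    (δ : ℝ) (hδ : 1 < δ)
    (bmax : ℝ) (hbmax : 0 ≤ bmax)
    (r : Fin N → ℝ) (hr : ∀ i, 0 < r i)
    (π : Fin T → ℝ) (hπ : ∀ t, 0 < π t)
    (ρ : ℝ)
    (hρ : ρ = (δ * Finset.univ.inf' hne π) ^ (-(1 / (δ - 1))) /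
      ∑ t, (δ * π t) ^ (-(1 / (δ - 1)))) :
    bmax + (∑ i, r i) / T ≤ bmax + ρ * ∑ i, r i ∧
      bmax + ρ * ∑ i, r i ≤ bmax + ∑ i, r i := by
  set e : ℝ := -(1 / (δ - 1)) with he
  have hδ0 : 0 < δ := lt_trans one_pos hδ
  have hinf : 0 < Finset.univ.inf' hne π := by
    obtain ⟨t, _, ht⟩ := Finset.exists_mem_eq_inf' hne π
    rw [ht]; exact hπ t
  have hnum : 0 < (δ * Finset.univ.inf' hne π) ^ e :=
    Real.rpow_pos_of_pos (mul_pos hδ0 hinf) e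
  have hterm : ∀ t : Fin T, 0 < (δ * π t) ^ e := fun t =>
    Real.rpow_pos_of_pos (mul_pos hδ0 (hπ t)) e
  have hsum : 0 < ∑ t, (δ * π t) ^ e :=
    Finset.sum_pos (fun t _ => hterm t) hne
  -- each term ≤ numerator (antitone, since e < 0)
  have hle : ∀ t : Fin T, (δ * π t) ^ e ≤ (δ * Finset.univ.inf' hne π) ^ e := by
    intro t
    apply Real.rpow_le_rpow_of_nonpos (mul_pos hδ0 hinf)
    · exact mul_le_mul_of_nonneg_left (Finset.inf'_le π (Finset.mem_univ t)) hδ0.le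
    · rw [he, neg_nonpos]
      have h1 : 0 < δ - 1 := by linarith
      positivity
  -- numerator ≤ sum
  have hnumle : (δ * Finset.univ.inf' hne π) ^ e ≤ ∑ t, (δ * π t) ^ e := by
    obtain ⟨t0, _, ht0⟩ := Finset.exists_mem_eq_inf' hne π
    calc (δ * Finset.univ.inf' hne π) ^ e = (δ * π t0) ^ e := by rw [ht0]
      _ ≤ ∑ t, (δ * π t) ^ e :=
        Finset.single_le_sum (fun t _ => (hterm t).le) (Finset.mem_univ t0)
  -- sum ≤ T * numerator
  have hsumle : ∑ t, (δ * π t) ^ e ≤ T * (δ * Finset.univ.inf' hne π) ^ e := by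
    calc ∑ t, (δ * π t) ^ e ≤ ∑ _t : Fin T, (δ * Finset.univ.inf' hne π) ^ e :=
          Finset.sum_le_sum (fun t _ => hle t)
      _ = T * (δ * Finset.univ.inf' hne π) ^ e := by
          simp [Finset.sum_const, nsmul_eq_mul]
  have hρ1 : ρ ≤ 1 := by
    rw [hρ, div_le_one hsum]; exact hnumle
  have hT0 : (0:ℝ) < T := by exact_mod_cast Nat.lt_of_lt_of_le Nat.zero_lt_one hT
  have hρ2 : 1 / T ≤ ρ := by
    rw [hρ, div_le_div_iff₀ hT0 hsum, one_mul]
    linarith [hsumle]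
  have hrsum : 0 ≤ ∑ i, r i := Finset.sum_nonneg (fun i _ => (hr i).le)
  constructor
  · have := mul_le_mul_of_nonneg_right hρ2 hrsum
    rw [div_mul_eq_mul_div, one_mul] at this
    linarith
  · have := mul_le_mul_of_nonneg_right hρ1 hrsum
    linarith
end

section
/- Let T ≥ 2, N ≥ 1, let b¹,...,b^T ≥ 0 with b_max = max_t b^t, and r₁,...,r_N > 0. Suppose Δ = Σ_t (b_max − b^t) − Σ_i r_i ≥ 0. Then there exists an allocation a ∈ ℝ^{N×T}_{≥0} with Σ_t a_i^t = r_i for every i such that b^t + Σ_i a_i^t ≤ b_max for all t. Consequently the peak demand max_t (b^t + Σ_i a_i^t) equals b_max. -/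
/-- If the total slack under the baseline maximum is at least the total flexible demand
(`Δ ≥ 0`), then the flexible demand can be allocated without raising the peak above
`b_max`, and the resulting peak demand equals `b_max`. -/
theorem stmt10 (T N : ℕ) (hT : 2 ≤ T) (hN : 1 ≤ N)
    (hne : (Finset.univ : Finset (Fin T)).Nonempty)
    (b : Fin T → ℝ) (hb : ∀ t, 0 ≤ b t)
    (bmax : ℝ) (hbmax : bmax = Finset.univ.sup' hne b)
    (r : Fin N → ℝ) (hr : ∀ i, 0 < r i)
    (hΔ : 0 ≤ (∑ t, (bmax - b t)) - ∑ i, r i) :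
    ∃ a : Fin N → Fin T → ℝ,
      (∀ i t, 0 ≤ a i t) ∧
      (∀ i, ∑ t, a i t = r i) ∧
      (∀ t, b t + ∑ i, a i t ≤ bmax) ∧
      Finset.univ.sup' hne (fun t => b t + ∑ i, a i t) = bmax := by
  set S := ∑ t, (bmax - b t) with hS
  set R := ∑ i, r i with hR
  have hle : ∀ t, b t ≤ bmax := by
    intro t
    rw [hbmax]
    exact Finset.le_sup' b (Finset.mem_univ t)
  have hRpos : 0 < R := by
    apply Finset.sum_pos (fun i _ => hr i)
    exact Finset.univ_nonempty_iff.mpr ⟨⟨0, hN⟩⟩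
  have hRS : R ≤ S := by linarith
  have hSpos : 0 < S := lt_of_lt_of_le hRpos hRS
  refine ⟨fun i t => r i * (bmax - b t) / S, ?_, ?_, ?_, ?_⟩
  · intro i t
    have h1 := hle t
    have h2 := (hr i).le
    apply div_nonneg (mul_nonneg h2 (by linarith)) hSpos.le
  · intro i
    rw [← Finset.sum_div, ← Finset.mul_sum, ← hS, mul_div_assoc,
      div_self hSpos.ne', mul_one]
  · intro t
    have hsum : ∑ i, r i * (bmax - b t) / S = R * (bmax - b t) / S := by
      rw [← Finset.sum_div, ← Finset.sum_mul]
    rw [hsum]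
    have h1 : R * (bmax - b t) / S ≤ bmax - b t := by
      rw [div_le_iff₀ hSpos]
      nlinarith [hle t]
    linarith
  · obtain ⟨t0, ht0, hts⟩ := Finset.exists_mem_eq_sup' hne b
    apply le_antisymm
    · apply Finset.sup'_le
      intro t _
      have hsum : ∑ i, r i * (bmax - b t) / S = R * (bmax - b t) / S := by
        rw [← Finset.sum_div, ← Finset.sum_mul]
      rw [hsum]
      have h1 : R * (bmax - b t) / S ≤ bmax - b t := by
        rw [div_le_iff₀ hSpos]
        nlinarith [hle t]
      linarith
    · have hbt : b t0 = bmax := by rw [hbmax, hts]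
      calc bmax = b t0 + ∑ i, r i * (bmax - b t0) / S := by
            simp [hbt]
        _ ≤ _ := Finset.le_sup' (fun t => b t + ∑ i, r i * (bmax - b t) / S) (Finset.mem_univ t0)
end

section
/- Let T ≥ 1, let p¹,...,p^T ≥ 0 with p_max = max_t p^t and p_D > T·p_max, let r > 0. Among allocations a ∈ ℝ^T_{≥0} with Σ_t a^t = r, the cost Σ_t p^t a^t + p_D·max_t a^t is uniquely minimized by the uniform allocation a^t = r/T for all t. -/
/-- Under anytime peak pricing with `pD > T * max_t p^t`, the uniform allocation
`a^t = r/T` is the unique minimizer of `∑ p^t a^t + pD * max_t a^t` over the simplex. -/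
theorem stmt14 (T : ℕ) (hT : 1 ≤ T)
    (hne : (Finset.univ : Finset (Fin T)).Nonempty)
    (p : Fin T → ℝ) (hp : ∀ t, 0 ≤ p t)
    (pD r : ℝ) (hr : 0 < r)
    (hpD : (T : ℝ) * Finset.univ.sup' hne p < pD) :
    ∀ a : Fin T → ℝ, (∀ t, 0 ≤ a t) → (∑ t, a t = r) →
      ((∑ t, p t * (r / T)) + pD * (r / T)
        ≤ (∑ t, p t * a t) + pD * Finset.univ.sup' hne a) ∧
      (((∑ t, p t * a t) + pD * Finset.univ.sup' hne a
        = (∑ t, p t * (r / T)) + pD * (r / T)) → a = fun _ => r / T) := by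
  intro a ha hsum
  set M := Finset.univ.sup' hne a with hMdef
  set pmax := Finset.univ.sup' hne p with hpmdef
  have hT0 : (0:ℝ) < T := by exact_mod_cast Nat.lt_of_lt_of_le Nat.zero_lt_one hT
  obtain ⟨t0, _⟩ := hne
  have hpmax : 0 ≤ pmax := le_trans (hp t0) (Finset.le_sup' p (Finset.mem_univ t0))
  have haM : ∀ t, a t ≤ M := fun t => Finset.le_sup' a (Finset.mem_univ t)
  have hpm : ∀ t, p t ≤ pmax := fun t => Finset.le_sup' p (Finset.mem_univ t)
  have hrTM : r / T ≤ M := by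
    rw [div_le_iff₀ hT0]
    calc r = ∑ t, a t := hsum.symm
      _ ≤ ∑ _t : Fin T, M := Finset.sum_le_sum (fun t _ => haM t)
      _ = M * T := by simp [Finset.sum_const, mul_comm]
  have hsumM : ∑ _t : Fin T, M = (T : ℝ) * M := by simp [Finset.sum_const, mul_comm]
  have key : (∑ t, p t * (r/T)) - ∑ t, p t * a t ≤ (T : ℝ) * pmax * (M - r/T) := by
    have h1 : ∀ t ∈ Finset.univ, p t * (r/T) - p t * a t ≤ pmax * (M - a t) := by
      intro t _
      rcases le_or_gt (a t) (r/T) with h | h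
      · have : p t * (r/T - a t) ≤ pmax * (r/T - a t) :=
          mul_le_mul_of_nonneg_right (hpm t) (by linarith)
        have h2 : pmax * (r/T - a t) ≤ pmax * (M - a t) :=
          mul_le_mul_of_nonneg_left (by linarith) hpmax
        nlinarith
      · have h3 : p t * (r/T - a t) ≤ 0 :=
          mul_nonpos_of_nonneg_of_nonpos (hp t) (by linarith)
        have h4 : 0 ≤ pmax * (M - a t) :=
          mul_nonneg hpmax (by linarith [haM t])
        nlinarith
    calc (∑ t, p t * (r/T)) - ∑ t, p t * a t
        = ∑ t, (p t * (r/T) - p t * a t) := by rw [Finset.sum_sub_distrib]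
      _ ≤ ∑ t, pmax * (M - a t) := Finset.sum_le_sum h1
      _ = (T : ℝ) * pmax * (M - r/T) := by
          rw [← Finset.mul_sum, Finset.sum_sub_distrib, hsumM, hsum]
          field_simp
  have hdelta : 0 ≤ M - r/T := by linarith
  have key2 : (T : ℝ) * pmax * (M - r/T) ≤ pD * (M - r/T) :=
    mul_le_mul_of_nonneg_right (le_of_lt hpD) hdelta
  constructor
  · nlinarith
  · intro heq
    have hM : M = r/T := by
      by_contra hne'
      have hlt : r/T < M := lt_of_le_of_ne hrTM (Ne.symm hne')
      have : (T : ℝ) * pmax * (M - r/T) < pD * (M - r/T) :=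
        mul_lt_mul_of_pos_right hpD (by linarith)
      nlinarith
    have hall : ∀ t ∈ Finset.univ, a t = r/T := by
      have hle : ∀ t ∈ (Finset.univ : Finset (Fin T)), a t ≤ r/T := fun t _ => hM ▸ haM t
      have hsums : ∑ t, a t = ∑ _t : Fin T, r/T := by
        rw [hsum]
        simp [Finset.sum_const]
        field_simp
      intro t ht
      exact (Finset.sum_eq_sum_iff_of_le hle).mp hsums t ht
    funext t
    exact hall t (Finset.mem_univ t)
end
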